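/- arXiv:math/0204074 — 3 statements merged into one kernel-verified Lean document; each statement's English description precedes it below -/
import Mathlib

section
/- The bracket relations defining the Lie algebra d_{2m} (for m ≥ 3), given on the basis (X_0, X_1, X_2, X_3, Y_1, ..., Y_{2m-4}, V_1, ..., V_m) by [X_0,X_i]=X_{i+1} for i=1,2; [Y_{2i-1},Y_{2i}]=X_3 for 1≤i≤m-2; [V_1,X_i]=(i+1)X_i for i=0,1,2,3; [V_1,Y_{2i-1}]=(i+4)Y_{2i-1}; [V_1,Y_{2i}]=-i·Y_{2i}; [V_2,X_i]=X_i for i=1,2,3; [V_2,Y_{2i}]=Y_{2i}; [V_{i+2},Y_{2i-1}]=Y_{2i-1}; [V_{i+2},Y_{2i}]=-Y_{2i} (all unlisted brackets zero or determined by antisymmetry), satisfy the Jacobi identity, hence define a Lie algebra structure on ℂ^{3m}. -/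
/-- Structure constants of the solvable rigid Lie algebra `d_{2m}` (m ≥ 3),
on the basis indexed by `0,…,3m-1` where `X_i ↦ i` (i = 0,…,3),
`Y_j ↦ 3 + j` (j = 1,…,2m-4) and `V_k ↦ 2m - 1 + k` (k = 1,…,m).
`str2m m i j` is the coordinate vector of the bracket `[e_i, e_j]`
in the "listed" direction of the defining relations. -/
noncomputable def str2m (m i j s : ℕ) : ℂ :=
  (if i = 0 ∧ (j = 1 ∨ j = 2) ∧ s = j + 1 then 1 else 0) +
  (if 4 ≤ i ∧ i ≤ 2 * m - 2 ∧ i % 2 = 0 ∧ j = i + 1 ∧ s = 3 then 1 else 0) +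
  (if i = 2 * m ∧ j ≤ 3 ∧ s = j then ((j + 1 : ℕ) : ℂ) else 0) +
  (if i = 2 * m ∧ 4 ≤ j ∧ j ≤ 2 * m - 2 ∧ j % 2 = 0 ∧ s = j then
    ((j / 2 + 3 : ℕ) : ℂ) else 0) +
  (if i = 2 * m ∧ 5 ≤ j ∧ j ≤ 2 * m - 1 ∧ j % 2 = 1 ∧ s = j then
    -(((j - 3) / 2 : ℕ) : ℂ) else 0) +
  (if i = 2 * m + 1 ∧ 1 ≤ j ∧ j ≤ 3 ∧ s = j then 1 else 0) +
  (if i = 2 * m + 1 ∧ 5 ≤ j ∧ j ≤ 2 * m - 1 ∧ j % 2 = 1 ∧ s = j then 1 else 0) +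
  (if 2 * m + 2 ≤ i ∧ i ≤ 3 * m - 1 ∧ j = 2 * (i - (2 * m + 1)) + 2 ∧ s = j then 1 else 0) +
  (if 2 * m + 2 ≤ i ∧ i ≤ 3 * m - 1 ∧ j = 2 * (i - (2 * m + 1)) + 3 ∧ s = j then -1 else 0)

/-- Antisymmetrized structure constants `C_{ij}^s` of `d_{2m}`. -/
noncomputable def C2m (m i j s : ℕ) : ℂ := str2m m i j s - str2m m j i s

/-- The bilinear bracket on `ℂ^{3m}` determined by the structure constants of `d_{2m}`. -/
noncomputable def bracket2m (m : ℕ) (u v : ℕ → ℂ) (s : ℕ) : ℂ :=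
  ∑ i ∈ Finset.range (3 * m), ∑ j ∈ Finset.range (3 * m), u i * v j * C2m m i j s

namespace D2mProof

/-- nilpotent-part structure constants -/
noncomputable def strN (m i j s : ℕ) : ℂ :=
  (if i = 0 ∧ (j = 1 ∨ j = 2) ∧ s = j + 1 then 1 else 0) +
  (if 4 ≤ i ∧ i ≤ 2 * m - 2 ∧ i % 2 = 0 ∧ j = i + 1 ∧ s = 3 then 1 else 0)

/-- eigenvalue of the diagonal element `v` on basis vector `n` -/
noncomputable def lam (m v n : ℕ) : ℂ :=
  (if v = 2 * m ∧ n ≤ 3 then ((n + 1 : ℕ) : ℂ) else 0) +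
  (if v = 2 * m ∧ 4 ≤ n ∧ n ≤ 2 * m - 2 ∧ n % 2 = 0 then ((n / 2 + 3 : ℕ) : ℂ) else 0) +
  (if v = 2 * m ∧ 5 ≤ n ∧ n ≤ 2 * m - 1 ∧ n % 2 = 1 then -(((n - 3) / 2 : ℕ) : ℂ) else 0) +
  (if v = 2 * m + 1 ∧ 1 ≤ n ∧ n ≤ 3 then 1 else 0) +
  (if v = 2 * m + 1 ∧ 5 ≤ n ∧ n ≤ 2 * m - 1 ∧ n % 2 = 1 then 1 else 0) +
  (if 2 * m + 2 ≤ v ∧ v ≤ 3 * m - 1 ∧ n = 2 * (v - (2 * m + 1)) + 2 then 1 else 0) +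
  (if 2 * m + 2 ≤ v ∧ v ≤ 3 * m - 1 ∧ n = 2 * (v - (2 * m + 1)) + 3 then -1 else 0)

noncomputable def Af (i j : ℕ) : ℂ :=
  (if i = 0 ∧ j = 1 then 1 else 0) - (if j = 0 ∧ i = 1 then 1 else 0)

noncomputable def Bf (m i j : ℕ) : ℂ :=
  (if i = 0 ∧ j = 2 then 1 else 0) - (if j = 0 ∧ i = 2 then 1 else 0) +
  (if 4 ≤ i ∧ i ≤ 2 * m - 2 ∧ i % 2 = 0 ∧ j = i + 1 then 1 else 0) -
  (if 4 ≤ j ∧ j ≤ 2 * m - 2 ∧ j % 2 = 0 ∧ i = j + 1 then 1 else 0)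

lemma str_lt (m i j s : ℕ) (hi : i < 2 * m) : str2m m i j s = strN m i j s := by
  unfold str2m strN
  rw [if_neg (show ¬(i = 2 * m ∧ j ≤ 3 ∧ s = j) by omega),
    if_neg (show ¬(i = 2 * m ∧ 4 ≤ j ∧ j ≤ 2 * m - 2 ∧ j % 2 = 0 ∧ s = j) by omega),
    if_neg (show ¬(i = 2 * m ∧ 5 ≤ j ∧ j ≤ 2 * m - 1 ∧ j % 2 = 1 ∧ s = j) by omega),
    if_neg (show ¬(i = 2 * m + 1 ∧ 1 ≤ j ∧ j ≤ 3 ∧ s = j) by omega),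
    if_neg (show ¬(i = 2 * m + 1 ∧ 5 ≤ j ∧ j ≤ 2 * m - 1 ∧ j % 2 = 1 ∧ s = j) by omega),
    if_neg (show ¬(2 * m + 2 ≤ i ∧ i ≤ 3 * m - 1 ∧ j = 2 * (i - (2 * m + 1)) + 2 ∧ s = j) by omega),
    if_neg (show ¬(2 * m + 2 ≤ i ∧ i ≤ 3 * m - 1 ∧ j = 2 * (i - (2 * m + 1)) + 3 ∧ s = j) by omega)]
  ring

lemma strD0 (m i j s : ℕ) (hm : 3 ≤ m) (hj : 2 * m ≤ j) : str2m m i j s = 0 := by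
  unfold str2m
  rw [if_neg (show ¬(i = 0 ∧ (j = 1 ∨ j = 2) ∧ s = j + 1) by omega),
    if_neg (show ¬(4 ≤ i ∧ i ≤ 2 * m - 2 ∧ i % 2 = 0 ∧ j = i + 1 ∧ s = 3) by omega),
    if_neg (show ¬(i = 2 * m ∧ j ≤ 3 ∧ s = j) by omega),
    if_neg (show ¬(i = 2 * m ∧ 4 ≤ j ∧ j ≤ 2 * m - 2 ∧ j % 2 = 0 ∧ s = j) by omega),
    if_neg (show ¬(i = 2 * m ∧ 5 ≤ j ∧ j ≤ 2 * m - 1 ∧ j % 2 = 1 ∧ s = j) by omega),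
    if_neg (show ¬(i = 2 * m + 1 ∧ 1 ≤ j ∧ j ≤ 3 ∧ s = j) by omega),
    if_neg (show ¬(i = 2 * m + 1 ∧ 5 ≤ j ∧ j ≤ 2 * m - 1 ∧ j % 2 = 1 ∧ s = j) by omega),
    if_neg (show ¬(2 * m + 2 ≤ i ∧ i ≤ 3 * m - 1 ∧ j = 2 * (i - (2 * m + 1)) + 2 ∧ s = j) by omega),
    if_neg (show ¬(2 * m + 2 ≤ i ∧ i ≤ 3 * m - 1 ∧ j = 2 * (i - (2 * m + 1)) + 3 ∧ s = j) by omega)]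
  ring

lemma Cskew (m i j s : ℕ) : C2m m i j s = -C2m m j i s := by unfold C2m; ring

/-- diagonal action: `[e_v, e_b] = lam v b • e_b` for `v` in the diagonal part -/
lemma C_Dn (m v b k : ℕ) (hm : 3 ≤ m) (hv : 2 * m ≤ v) :
    C2m m v b k = if k = b then lam m v b else 0 := by
  unfold C2m
  rw [strD0 m b v k hm hv, sub_zero]
  unfold str2m
  rw [if_neg (show ¬(v = 0 ∧ (b = 1 ∨ b = 2) ∧ k = b + 1) by omega),
    if_neg (show ¬(4 ≤ v ∧ v ≤ 2 * m - 2 ∧ v % 2 = 0 ∧ b = v + 1 ∧ k = 3) by omega)]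
  by_cases hkb : k = b
  · subst hkb
    rw [if_pos rfl]
    simp [lam]
  · rw [if_neg hkb,
      if_neg (show ¬(v = 2 * m ∧ b ≤ 3 ∧ k = b) by omega),
      if_neg (show ¬(v = 2 * m ∧ 4 ≤ b ∧ b ≤ 2 * m - 2 ∧ b % 2 = 0 ∧ k = b) by omega),
      if_neg (show ¬(v = 2 * m ∧ 5 ≤ b ∧ b ≤ 2 * m - 1 ∧ b % 2 = 1 ∧ k = b) by omega),
      if_neg (show ¬(v = 2 * m + 1 ∧ 1 ≤ b ∧ b ≤ 3 ∧ k = b) by omega),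
      if_neg (show ¬(v = 2 * m + 1 ∧ 5 ≤ b ∧ b ≤ 2 * m - 1 ∧ b % 2 = 1 ∧ k = b) by omega),
      if_neg (show ¬(2 * m + 2 ≤ v ∧ v ≤ 3 * m - 1 ∧ b = 2 * (v - (2 * m + 1)) + 2 ∧ k = b) by omega),
      if_neg (show ¬(2 * m + 2 ≤ v ∧ v ≤ 3 * m - 1 ∧ b = 2 * (v - (2 * m + 1)) + 3 ∧ k = b) by omega)]
    ring

lemma C_DD (m v w s : ℕ) (hm : 3 ≤ m) (hv : 2 * m ≤ v) (hw : 2 * m ≤ w) :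
    C2m m v w s = 0 := by
  unfold C2m; rw [strD0 m v w s hm hw, strD0 m w v s hm hv]; ring

lemma strN_decomp (m a b k : ℕ) : strN m a b k =
    (if k = 2 then (if a = 0 ∧ b = 1 then 1 else 0) else 0) +
    (if k = 3 then ((if a = 0 ∧ b = 2 then 1 else 0) +
      (if 4 ≤ a ∧ a ≤ 2 * m - 2 ∧ a % 2 = 0 ∧ b = a + 1 then 1 else 0)) else 0) := by
  unfold strN
  split_ifs <;> first | omega | norm_num | simp_all

lemma C_NN (m a b k : ℕ) (ha : a < 2 * m) (hb : b < 2 * m) :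
    C2m m a b k = (if k = 2 then Af a b else 0) + (if k = 3 then Bf m a b else 0) := by
  unfold C2m
  rw [str_lt m a b k ha, str_lt m b a k hb, strN_decomp, strN_decomp]
  unfold Af Bf
  by_cases h2 : k = 2
  · subst h2; norm_num
  · by_cases h3 : k = 3
    · subst h3; norm_num; ring
    · rw [if_neg h2, if_neg h3, if_neg h2, if_neg h3, if_neg h2, if_neg h3]; ring


lemma lamA (m n : ℕ) : lam m (2 * m) n =
    (if n ≤ 3 then ((n + 1 : ℕ) : ℂ) else 0) +
    (if 4 ≤ n ∧ n ≤ 2 * m - 2 ∧ n % 2 = 0 then ((n / 2 + 3 : ℕ) : ℂ) else 0) +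
    (if 5 ≤ n ∧ n ≤ 2 * m - 1 ∧ n % 2 = 1 then -(((n - 3) / 2 : ℕ) : ℂ) else 0) := by
  unfold lam
  rw [if_neg (show ¬(2 * m = 2 * m + 1 ∧ 1 ≤ n ∧ n ≤ 3) by omega),
    if_neg (show ¬(2 * m = 2 * m + 1 ∧ 5 ≤ n ∧ n ≤ 2 * m - 1 ∧ n % 2 = 1) by omega),
    if_neg (show ¬(2 * m + 2 ≤ 2 * m ∧ 2 * m ≤ 3 * m - 1 ∧ n = 2 * (2 * m - (2 * m + 1)) + 2) by omega),
    if_neg (show ¬(2 * m + 2 ≤ 2 * m ∧ 2 * m ≤ 3 * m - 1 ∧ n = 2 * (2 * m - (2 * m + 1)) + 3) by omega)]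
  simp

lemma lamB (m n : ℕ) : lam m (2 * m + 1) n =
    (if 1 ≤ n ∧ n ≤ 3 then 1 else 0) +
    (if 5 ≤ n ∧ n ≤ 2 * m - 1 ∧ n % 2 = 1 then 1 else 0) := by
  unfold lam
  rw [if_neg (show ¬(2 * m + 1 = 2 * m ∧ n ≤ 3) by omega),
    if_neg (show ¬(2 * m + 1 = 2 * m ∧ 4 ≤ n ∧ n ≤ 2 * m - 2 ∧ n % 2 = 0) by omega),
    if_neg (show ¬(2 * m + 1 = 2 * m ∧ 5 ≤ n ∧ n ≤ 2 * m - 1 ∧ n % 2 = 1) by omega),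
    if_neg (show ¬(2 * m + 2 ≤ 2 * m + 1 ∧ 2 * m + 1 ≤ 3 * m - 1 ∧ n = 2 * (2 * m + 1 - (2 * m + 1)) + 2) by omega),
    if_neg (show ¬(2 * m + 2 ≤ 2 * m + 1 ∧ 2 * m + 1 ≤ 3 * m - 1 ∧ n = 2 * (2 * m + 1 - (2 * m + 1)) + 3) by omega)]
  simp

lemma lamC (m v n : ℕ) (hv : 2 * m + 2 ≤ v) (hv3 : v ≤ 3 * m - 1) : lam m v n =
    (if n = 2 * (v - (2 * m + 1)) + 2 then 1 else 0) +
    (if n = 2 * (v - (2 * m + 1)) + 3 then -1 else 0) := by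
  unfold lam
  rw [if_neg (show ¬(v = 2 * m ∧ n ≤ 3) by omega),
    if_neg (show ¬(v = 2 * m ∧ 4 ≤ n ∧ n ≤ 2 * m - 2 ∧ n % 2 = 0) by omega),
    if_neg (show ¬(v = 2 * m ∧ 5 ≤ n ∧ n ≤ 2 * m - 1 ∧ n % 2 = 1) by omega),
    if_neg (show ¬(v = 2 * m + 1 ∧ 1 ≤ n ∧ n ≤ 3) by omega),
    if_neg (show ¬(v = 2 * m + 1 ∧ 5 ≤ n ∧ n ≤ 2 * m - 1 ∧ n % 2 = 1) by omega)]
  simp only [show (2 * m + 2 ≤ v ∧ v ≤ 3 * m - 1 ∧ n = 2 * (v - (2 * m + 1)) + 2) ↔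
      (n = 2 * (v - (2 * m + 1)) + 2) from by omega,
    show (2 * m + 2 ≤ v ∧ v ≤ 3 * m - 1 ∧ n = 2 * (v - (2 * m + 1)) + 3) ↔
      (n = 2 * (v - (2 * m + 1)) + 3) from by omega]
  ring

lemma K1 (m v : ℕ) (hm : 3 ≤ m) (hv : 2 * m ≤ v) (hv3 : v ≤ 3 * m - 1) :
    lam m v 0 + lam m v 1 = lam m v 2 := by
  have h : v = 2 * m ∨ v = 2 * m + 1 ∨ 2 * m + 2 ≤ v := by omega
  rcases h with h | h | h
  · subst h; rw [lamA, lamA, lamA]; norm_num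
  · subst h; rw [lamB, lamB, lamB]; norm_num
  · rw [lamC m v 0 h hv3, lamC m v 1 h hv3, lamC m v 2 h hv3]
    rw [if_neg (show ¬(0 = 2 * (v - (2 * m + 1)) + 2) by omega),
      if_neg (show ¬(0 = 2 * (v - (2 * m + 1)) + 3) by omega),
      if_neg (show ¬(1 = 2 * (v - (2 * m + 1)) + 2) by omega),
      if_neg (show ¬(1 = 2 * (v - (2 * m + 1)) + 3) by omega),
      if_neg (show ¬(2 = 2 * (v - (2 * m + 1)) + 2) by omega),
      if_neg (show ¬(2 = 2 * (v - (2 * m + 1)) + 3) by omega)]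
    ring

lemma K2 (m v : ℕ) (hm : 3 ≤ m) (hv : 2 * m ≤ v) (hv3 : v ≤ 3 * m - 1) :
    lam m v 0 + lam m v 2 = lam m v 3 := by
  have h : v = 2 * m ∨ v = 2 * m + 1 ∨ 2 * m + 2 ≤ v := by omega
  rcases h with h | h | h
  · subst h; rw [lamA, lamA, lamA]; norm_num
  · subst h; rw [lamB, lamB, lamB]; norm_num
  · rw [lamC m v 0 h hv3, lamC m v 2 h hv3, lamC m v 3 h hv3]
    rw [if_neg (show ¬(0 = 2 * (v - (2 * m + 1)) + 2) by omega),
      if_neg (show ¬(0 = 2 * (v - (2 * m + 1)) + 3) by omega),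
      if_neg (show ¬(2 = 2 * (v - (2 * m + 1)) + 2) by omega),
      if_neg (show ¬(2 = 2 * (v - (2 * m + 1)) + 3) by omega),
      if_neg (show ¬(3 = 2 * (v - (2 * m + 1)) + 2) by omega),
      if_neg (show ¬(3 = 2 * (v - (2 * m + 1)) + 3) by omega)]
    ring

lemma K3 (m v e : ℕ) (hm : 3 ≤ m) (hv : 2 * m ≤ v) (hv3 : v ≤ 3 * m - 1)
    (he4 : 4 ≤ e) (he2 : e ≤ 2 * m - 2) (hee : e % 2 = 0) :
    lam m v e + lam m v (e + 1) = lam m v 3 := by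
  have h : v = 2 * m ∨ v = 2 * m + 1 ∨ 2 * m + 2 ≤ v := by omega
  rcases h with h | h | h
  · subst h; rw [lamA, lamA, lamA]
    rw [if_neg (show ¬(e ≤ 3) by omega),
      if_pos (show 4 ≤ e ∧ e ≤ 2 * m - 2 ∧ e % 2 = 0 by omega),
      if_neg (show ¬(5 ≤ e ∧ e ≤ 2 * m - 1 ∧ e % 2 = 1) by omega),
      if_neg (show ¬(e + 1 ≤ 3) by omega),
      if_neg (show ¬(4 ≤ e + 1 ∧ e + 1 ≤ 2 * m - 2 ∧ (e + 1) % 2 = 0) by omega),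
      if_pos (show 5 ≤ e + 1 ∧ e + 1 ≤ 2 * m - 1 ∧ (e + 1) % 2 = 1 by omega),
      if_pos (show (3 : ℕ) ≤ 3 by omega),
      if_neg (show ¬(4 ≤ 3 ∧ 3 ≤ 2 * m - 2 ∧ 3 % 2 = 0) by omega),
      if_neg (show ¬(5 ≤ 3 ∧ 3 ≤ 2 * m - 1 ∧ 3 % 2 = 1) by omega)]
    obtain ⟨t, rfl⟩ : ∃ t, e = 2 * t := ⟨e / 2, by omega⟩
    have h1 : 2 * t / 2 = t := by omega
    have h2 : (2 * t + 1 - 3) / 2 = t - 1 := by omega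
    rw [h1, h2, Nat.cast_sub (show 1 ≤ t by omega)]
    push_cast
    ring
  · subst h; rw [lamB, lamB, lamB]
    rw [if_neg (show ¬(1 ≤ e ∧ e ≤ 3) by omega),
      if_neg (show ¬(5 ≤ e ∧ e ≤ 2 * m - 1 ∧ e % 2 = 1) by omega),
      if_neg (show ¬(1 ≤ e + 1 ∧ e + 1 ≤ 3) by omega),
      if_pos (show 5 ≤ e + 1 ∧ e + 1 ≤ 2 * m - 1 ∧ (e + 1) % 2 = 1 by omega),
      if_pos (show 1 ≤ 3 ∧ 3 ≤ 3 by omega),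
      if_neg (show ¬(5 ≤ 3 ∧ 3 ≤ 2 * m - 1 ∧ 3 % 2 = 1) by omega)]
    ring
  · rw [lamC m v e h hv3, lamC m v (e + 1) h hv3, lamC m v 3 h hv3]
    rw [if_neg (show ¬(e = 2 * (v - (2 * m + 1)) + 3) by omega),
      if_neg (show ¬(e + 1 = 2 * (v - (2 * m + 1)) + 2) by omega),
      if_neg (show ¬(3 = 2 * (v - (2 * m + 1)) + 2) by omega),
      if_neg (show ¬(3 = 2 * (v - (2 * m + 1)) + 3) by omega)]
    by_cases hE : e = 2 * (v - (2 * m + 1)) + 2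
    · rw [if_pos hE, if_pos (by omega)]; ring
    · rw [if_neg hE, if_neg (by omega)]; ring

lemma sum_ite_collapse (n t : ℕ) (c : ℂ) (f : ℕ → ℂ) (ht : t < n) :
    ∑ k ∈ Finset.range n, (if k = t then c else 0) * f k = c * f t := by
  have h : ∀ k, (if k = t then c else 0) * f k = if k = t then c * f k else 0 := by
    intro k; split_ifs <;> ring
  simp only [h]
  rw [Finset.sum_ite_eq' (Finset.range n) t fun k => c * f k,
    if_pos (Finset.mem_range.mpr ht)]

lemma sumN (m a b : ℕ) (f : ℕ → ℂ) (hm : 3 ≤ m) (ha : a < 2 * m) (hb : b < 2 * m) :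
    ∑ k ∈ Finset.range (3 * m), C2m m a b k * f k = Af a b * f 2 + Bf m a b * f 3 := by
  have h : ∀ k, C2m m a b k * f k =
      (if k = 2 then Af a b else 0) * f k + (if k = 3 then Bf m a b else 0) * f k := by
    intro k; rw [C_NN m a b k ha hb]; ring
  simp only [h]
  rw [Finset.sum_add_distrib, sum_ite_collapse _ _ _ _ (by omega),
    sum_ite_collapse _ _ _ _ (by omega)]

lemma sumD (m v b : ℕ) (f : ℕ → ℂ) (hm : 3 ≤ m) (hv : 2 * m ≤ v) (hb : b < 3 * m) :
    ∑ k ∈ Finset.range (3 * m), C2m m v b k * f k = lam m v b * f b := by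
  simp only [C_Dn m v b _ hm hv]
  exact sum_ite_collapse _ _ _ _ hb

lemma sumD' (m v b : ℕ) (f : ℕ → ℂ) (hm : 3 ≤ m) (hv : 2 * m ≤ v) (hb : b < 3 * m) :
    ∑ k ∈ Finset.range (3 * m), C2m m b v k * f k = -(lam m v b * f b) := by
  have h : ∀ k, C2m m b v k * f k = -((if k = b then lam m v b else 0) * f k) := by
    intro k; rw [Cskew, C_Dn m v b _ hm hv]; ring
  simp only [h]
  rw [Finset.sum_neg_distrib, sum_ite_collapse _ _ _ _ hb]

lemma sumDD (m v w : ℕ) (f : ℕ → ℂ) (hm : 3 ≤ m) (hv : 2 * m ≤ v) (hw : 2 * m ≤ w) :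
    ∑ k ∈ Finset.range (3 * m), C2m m v w k * f k = 0 := by
  simp only [C_DD m v w _ hm hv hw, zero_mul, Finset.sum_const_zero]

lemma C2val (m l s : ℕ) (hm : 3 ≤ m) (hl : l < 2 * m) :
    C2m m 2 l s = -(if l = 0 ∧ s = 3 then 1 else 0) := by
  rw [C_NN m 2 l s (by omega) hl]
  unfold Af Bf
  split_ifs <;> first | omega | simp_all | norm_num

lemma C3val (m l s : ℕ) (hm : 3 ≤ m) (hl : l < 2 * m) : C2m m 3 l s = 0 := by
  rw [C_NN m 3 l s (by omega) hl]
  unfold Af Bf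
  split_ifs <;> first | omega | simp_all | norm_num

lemma jacNNN (m i j l s : ℕ) (hm : 3 ≤ m) (hi : i < 2 * m) (hj : j < 2 * m) (hl : l < 2 * m) :
    (∑ k ∈ Finset.range (3 * m), C2m m i j k * C2m m k l s) +
    (∑ k ∈ Finset.range (3 * m), C2m m j l k * C2m m k i s) +
    (∑ k ∈ Finset.range (3 * m), C2m m l i k * C2m m k j s) = 0 := by
  rw [sumN m i j _ hm hi hj, sumN m j l _ hm hj hl, sumN m l i _ hm hl hi,
    C2val m l s hm hl, C2val m i s hm hi, C2val m j s hm hj,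
    C3val m l s hm hl, C3val m i s hm hi, C3val m j s hm hj]
  unfold Af
  split_ifs <;> first | omega | ring

lemma jacNND (m i j l s : ℕ) (hm : 3 ≤ m) (hi : i < 2 * m) (hj : j < 2 * m)
    (hl : 2 * m ≤ l) (hl3 : l ≤ 3 * m - 1) :
    (∑ k ∈ Finset.range (3 * m), C2m m i j k * C2m m k l s) +
    (∑ k ∈ Finset.range (3 * m), C2m m j l k * C2m m k i s) +
    (∑ k ∈ Finset.range (3 * m), C2m m l i k * C2m m k j s) = 0 := by
  rw [sumN m i j _ hm hi hj, sumD' m l j _ hm hl (by omega), sumD m l i _ hm hl (by omega),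
    Cskew m 2 l s, C_Dn m l 2 s hm hl, Cskew m 3 l s, C_Dn m l 3 s hm hl,
    C_NN m j i s hj hi, C_NN m i j s hi hj]
  have hA : Af j i = -Af i j := by unfold Af; ring
  have hB : Bf m j i = -Bf m i j := by unfold Bf; ring
  rw [hA, hB]
  by_cases hs2 : s = 2
  · subst hs2
    rw [if_pos rfl, if_pos rfl, if_pos rfl,
      if_neg (show (2:ℕ) ≠ 3 by omega), if_neg (show (2:ℕ) ≠ 3 by omega),
      if_neg (show (2:ℕ) ≠ 3 by omega)]
    have h : (i = 0 ∧ j = 1) ∨ (j = 0 ∧ i = 1) ∨ (¬(i = 0 ∧ j = 1) ∧ ¬(j = 0 ∧ i = 1)) := by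
      by_cases h1 : i = 0 ∧ j = 1
      · exact Or.inl h1
      · by_cases h2 : j = 0 ∧ i = 1
        · exact Or.inr (Or.inl h2)
        · exact Or.inr (Or.inr ⟨h1, h2⟩)
    have hK := K1 m l hm hl hl3
    rcases h with ⟨rfl, rfl⟩ | ⟨rfl, rfl⟩ | ⟨h1, h2⟩
    · unfold Af
      rw [if_pos ⟨rfl, rfl⟩, if_neg (by omega)]
      linear_combination hK
    · unfold Af
      rw [if_neg (by omega), if_pos ⟨rfl, rfl⟩]
      linear_combination -hK
    · unfold Af
      rw [if_neg h1, if_neg h2]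
      ring
  · by_cases hs3 : s = 3
    · subst hs3
      rw [if_neg (show (3:ℕ) ≠ 2 by omega), if_neg (show (3:ℕ) ≠ 2 by omega),
        if_neg (show (3:ℕ) ≠ 2 by omega), if_pos rfl, if_pos rfl, if_pos rfl]
      have h : (i = 0 ∧ j = 2) ∨ (j = 0 ∧ i = 2) ∨
          (4 ≤ i ∧ i ≤ 2 * m - 2 ∧ i % 2 = 0 ∧ j = i + 1) ∨
          (4 ≤ j ∧ j ≤ 2 * m - 2 ∧ j % 2 = 0 ∧ i = j + 1) ∨
          (¬(i = 0 ∧ j = 2) ∧ ¬(j = 0 ∧ i = 2) ∧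
            ¬(4 ≤ i ∧ i ≤ 2 * m - 2 ∧ i % 2 = 0 ∧ j = i + 1) ∧
            ¬(4 ≤ j ∧ j ≤ 2 * m - 2 ∧ j % 2 = 0 ∧ i = j + 1)) := by tauto
      rcases h with ⟨rfl, rfl⟩ | ⟨rfl, rfl⟩ | h1 | h1 | ⟨h1, h2, h3, h4⟩
      · unfold Bf
        rw [if_pos ⟨rfl, rfl⟩, if_neg (by omega), if_neg (by omega), if_neg (by omega)]
        linear_combination K2 m l hm hl hl3
      · unfold Bf
        rw [if_neg (by omega), if_pos ⟨rfl, rfl⟩, if_neg (by omega), if_neg (by omega)]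
        linear_combination -K2 m l hm hl hl3
      · obtain ⟨h4, h2m, hpar, rfl⟩ := h1
        unfold Bf
        rw [if_neg (by omega), if_neg (by omega), if_pos ⟨h4, h2m, hpar, rfl⟩,
          if_neg (by omega)]
        linear_combination K3 m l i hm hl hl3 h4 h2m hpar
      · obtain ⟨h4, h2m, hpar, rfl⟩ := h1
        unfold Bf
        rw [if_neg (by omega), if_neg (by omega), if_neg (by omega),
          if_pos ⟨h4, h2m, hpar, rfl⟩]
        linear_combination -K3 m l j hm hl hl3 h4 h2m hpar
      · unfold Bf
        rw [if_neg h1, if_neg h2, if_neg h3, if_neg h4]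
        ring
    · rw [if_neg hs2, if_neg hs3, if_neg hs2, if_neg hs3, if_neg hs2, if_neg hs3]
      ring

lemma jacNDD (m i j l s : ℕ) (hm : 3 ≤ m) (hi : i < 2 * m)
    (hj : 2 * m ≤ j) (hl : 2 * m ≤ l) :
    (∑ k ∈ Finset.range (3 * m), C2m m i j k * C2m m k l s) +
    (∑ k ∈ Finset.range (3 * m), C2m m j l k * C2m m k i s) +
    (∑ k ∈ Finset.range (3 * m), C2m m l i k * C2m m k j s) = 0 := by
  rw [sumD' m j i _ hm hj (by omega), sumDD m j l _ hm hj hl, sumD m l i _ hm hl (by omega),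
    Cskew m i l s, C_Dn m l i s hm hl, Cskew m i j s, C_Dn m j i s hm hj]
  split_ifs <;> ring

lemma jacDDD (m i j l s : ℕ) (hm : 3 ≤ m) (hi : 2 * m ≤ i) (hj : 2 * m ≤ j)
    (hl : 2 * m ≤ l) :
    (∑ k ∈ Finset.range (3 * m), C2m m i j k * C2m m k l s) +
    (∑ k ∈ Finset.range (3 * m), C2m m j l k * C2m m k i s) +
    (∑ k ∈ Finset.range (3 * m), C2m m l i k * C2m m k j s) = 0 := by
  rw [sumDD m i j _ hm hi hj, sumDD m j l _ hm hj hl, sumDD m l i _ hm hl hi]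
  ring

lemma jac (m i j l s : ℕ) (hm : 3 ≤ m) (hi : i < 3 * m) (hj : j < 3 * m) (hl : l < 3 * m) :
    (∑ k ∈ Finset.range (3 * m), C2m m i j k * C2m m k l s) +
    (∑ k ∈ Finset.range (3 * m), C2m m j l k * C2m m k i s) +
    (∑ k ∈ Finset.range (3 * m), C2m m l i k * C2m m k j s) = 0 := by
  rcases Nat.lt_or_ge i (2 * m) with hi2 | hi2 <;>
    rcases Nat.lt_or_ge j (2 * m) with hj2 | hj2 <;>
    rcases Nat.lt_or_ge l (2 * m) with hl2 | hl2
  · exact jacNNN m i j l s hm hi2 hj2 hl2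
  · exact jacNND m i j l s hm hi2 hj2 hl2 (by omega)
  · linear_combination jacNND m l i j s hm hl2 hi2 hj2 (by omega)
  · exact jacNDD m i j l s hm hi2 hj2 hl2
  · linear_combination jacNND m j l i s hm hj2 hl2 hi2 (by omega)
  · linear_combination jacNDD m j l i s hm hj2 hl2 hi2
  · linear_combination jacNDD m l i j s hm hl2 hi2 hj2
  · exact jacDDD m i j l s hm hi2 hj2 hl2

lemma comm4 (n : ℕ) (F : ℕ → ℕ → ℕ → ℕ → ℂ) :
    ∑ k ∈ Finset.range n, ∑ c ∈ Finset.range n, ∑ a ∈ Finset.range n,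
      ∑ b ∈ Finset.range n, F k c a b =
    ∑ a ∈ Finset.range n, ∑ b ∈ Finset.range n, ∑ c ∈ Finset.range n,
      ∑ k ∈ Finset.range n, F k c a b :=
  calc ∑ k ∈ Finset.range n, ∑ c ∈ Finset.range n, ∑ a ∈ Finset.range n,
      ∑ b ∈ Finset.range n, F k c a b
      = ∑ c ∈ Finset.range n, ∑ k ∈ Finset.range n, ∑ a ∈ Finset.range n,
        ∑ b ∈ Finset.range n, F k c a b := Finset.sum_comm
    _ = ∑ c ∈ Finset.range n, ∑ a ∈ Finset.range n, ∑ k ∈ Finset.range n,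
        ∑ b ∈ Finset.range n, F k c a b :=
        Finset.sum_congr rfl fun c _ => Finset.sum_comm
    _ = ∑ c ∈ Finset.range n, ∑ a ∈ Finset.range n, ∑ b ∈ Finset.range n,
        ∑ k ∈ Finset.range n, F k c a b :=
        Finset.sum_congr rfl fun c _ => Finset.sum_congr rfl fun a _ => Finset.sum_comm
    _ = ∑ a ∈ Finset.range n, ∑ c ∈ Finset.range n, ∑ b ∈ Finset.range n,
        ∑ k ∈ Finset.range n, F k c a b := Finset.sum_comm
    _ = ∑ a ∈ Finset.range n, ∑ b ∈ Finset.range n, ∑ c ∈ Finset.range n,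
        ∑ k ∈ Finset.range n, F k c a b :=
        Finset.sum_congr rfl fun a _ => Finset.sum_comm

lemma rot3 (n : ℕ) (F : ℕ → ℕ → ℕ → ℂ) :
    ∑ a ∈ Finset.range n, ∑ b ∈ Finset.range n, ∑ c ∈ Finset.range n, F a b c =
    ∑ c ∈ Finset.range n, ∑ a ∈ Finset.range n, ∑ b ∈ Finset.range n, F a b c :=
  calc ∑ a ∈ Finset.range n, ∑ b ∈ Finset.range n, ∑ c ∈ Finset.range n, F a b c
      = ∑ a ∈ Finset.range n, ∑ c ∈ Finset.range n, ∑ b ∈ Finset.range n, F a b c :=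
        Finset.sum_congr rfl fun a _ => Finset.sum_comm
    _ = ∑ c ∈ Finset.range n, ∑ a ∈ Finset.range n, ∑ b ∈ Finset.range n, F a b c :=
        Finset.sum_comm

lemma expand (m : ℕ) (u v w : ℕ → ℂ) (s : ℕ) :
    bracket2m m (bracket2m m u v) w s =
    ∑ a ∈ Finset.range (3 * m), ∑ b ∈ Finset.range (3 * m), ∑ c ∈ Finset.range (3 * m),
      u a * v b * w c * ∑ k ∈ Finset.range (3 * m), C2m m a b k * C2m m k c s := by
  unfold bracket2m
  calc ∑ k ∈ Finset.range (3 * m), ∑ c ∈ Finset.range (3 * m),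
      (∑ a ∈ Finset.range (3 * m), ∑ b ∈ Finset.range (3 * m), u a * v b * C2m m a b k) *
        w c * C2m m k c s
      = ∑ k ∈ Finset.range (3 * m), ∑ c ∈ Finset.range (3 * m), ∑ a ∈ Finset.range (3 * m),
        ∑ b ∈ Finset.range (3 * m), u a * v b * w c * (C2m m a b k * C2m m k c s) := by
        refine Finset.sum_congr rfl fun k _ => Finset.sum_congr rfl fun c _ => ?_
        rw [Finset.sum_mul, Finset.sum_mul]
        refine Finset.sum_congr rfl fun a _ => ?_
        rw [Finset.sum_mul, Finset.sum_mul]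
        exact Finset.sum_congr rfl fun b _ => by ring
    _ = ∑ a ∈ Finset.range (3 * m), ∑ b ∈ Finset.range (3 * m), ∑ c ∈ Finset.range (3 * m),
        ∑ k ∈ Finset.range (3 * m), u a * v b * w c * (C2m m a b k * C2m m k c s) :=
        comm4 (3 * m) _
    _ = ∑ a ∈ Finset.range (3 * m), ∑ b ∈ Finset.range (3 * m), ∑ c ∈ Finset.range (3 * m),
        u a * v b * w c * ∑ k ∈ Finset.range (3 * m), C2m m a b k * C2m m k c s := by
        refine Finset.sum_congr rfl fun a _ => Finset.sum_congr rfl fun b _ =>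
          Finset.sum_congr rfl fun c _ => ?_
        rw [Finset.mul_sum]


end D2mProof

/-- The bracket relations of `d_{2m}` (m ≥ 3) are antisymmetric and satisfy the
Jacobi identity, hence define a Lie algebra structure on `ℂ^{3m}`. -/
theorem d2m_jacobi (m : ℕ) (hm : 3 ≤ m) :
    (∀ u v : ℕ → ℂ, ∀ s : ℕ, bracket2m m u v s = -bracket2m m v u s) ∧
    (∀ u v w : ℕ → ℂ, ∀ s : ℕ,
      bracket2m m (bracket2m m u v) w s + bracket2m m (bracket2m m v w) u s +
        bracket2m m (bracket2m m w u) v s = 0) := by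

  constructor
  · intro u v s
    unfold bracket2m
    calc ∑ i ∈ Finset.range (3 * m), ∑ j ∈ Finset.range (3 * m), u i * v j * C2m m i j s
        = ∑ i ∈ Finset.range (3 * m), ∑ j ∈ Finset.range (3 * m),
          -(v j * u i * C2m m j i s) := by
          refine Finset.sum_congr rfl fun i _ => Finset.sum_congr rfl fun j _ => ?_
          unfold C2m; ring
      _ = -∑ i ∈ Finset.range (3 * m), ∑ j ∈ Finset.range (3 * m),
          v j * u i * C2m m j i s := by
          simp only [Finset.sum_neg_distrib]
      _ = -∑ j ∈ Finset.range (3 * m), ∑ i ∈ Finset.range (3 * m),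
          v j * u i * C2m m j i s := by rw [Finset.sum_comm]
  · intro u v w s
    rw [D2mProof.expand m u v w s, D2mProof.expand m v w u s, D2mProof.expand m w u v s,
      D2mProof.rot3 (3 * m) (fun a b c => v a * w b * u c *
        ∑ k ∈ Finset.range (3 * m), C2m m a b k * C2m m k c s),
      D2mProof.rot3 (3 * m) (fun a b c => w a * u b * v c *
        ∑ k ∈ Finset.range (3 * m), C2m m a b k * C2m m k c s),
      D2mProof.rot3 (3 * m) (fun x y z => w y * u z * v x *
        ∑ k ∈ Finset.range (3 * m), C2m m y z k * C2m m k x s),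
      ← Finset.sum_add_distrib, ← Finset.sum_add_distrib]
    refine Finset.sum_eq_zero fun a ha => ?_
    rw [← Finset.sum_add_distrib, ← Finset.sum_add_distrib]
    refine Finset.sum_eq_zero fun b hb => ?_
    rw [← Finset.sum_add_distrib, ← Finset.sum_add_distrib]
    refine Finset.sum_eq_zero fun c hc => ?_
    have hJ := D2mProof.jac m a b c s hm (Finset.mem_range.mp ha) (Finset.mem_range.mp hb)
      (Finset.mem_range.mp hc)
    have hJ2 := D2mProof.jac m b c a s hm (Finset.mem_range.mp hb) (Finset.mem_range.mp hc)
      (Finset.mem_range.mp ha)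
    have hJ3 := D2mProof.jac m c a b s hm (Finset.mem_range.mp hc) (Finset.mem_range.mp ha)
      (Finset.mem_range.mp hb)
    linear_combination (u a * v b * w c) * hJ
end

section
/- For the Lie algebra d_5', the subspace spanned by X_0, X_1, X_2, X_3, Y_1 is the nilradical: it is a nilpotent ideal (indeed its lower central series satisfies C^1 = span{X_2, X_3, Y_1}, C^2 = span{X_3, Y_1}, C^3 = 0), and it contains every nilpotent ideal of d_5'. -/
/-- Structure constants of the 7-dimensional rigid Lie algebra `d_5'`, basis
`X_0 ↦ 0, …, X_3 ↦ 3, Y_1 ↦ 4, V_1 ↦ 5, V_2 ↦ 6` (listed direction). -/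
noncomputable def strD5 (i j s : ℕ) : ℂ :=
  (if i = 0 ∧ (j = 1 ∨ j = 2) ∧ s = j + 1 then 1 else 0) +
  (if i = 1 ∧ j = 2 ∧ s = 4 then 1 else 0) +
  (if i = 5 ∧ j ≤ 3 ∧ s = j then ((j + 1 : ℕ) : ℂ) else 0) +
  (if i = 5 ∧ j = 4 ∧ s = 4 then 5 else 0) +
  (if i = 6 ∧ 1 ≤ j ∧ j ≤ 3 ∧ s = j then 1 else 0) +
  (if i = 6 ∧ j = 4 ∧ s = 4 then 2 else 0)

/-- Antisymmetrized structure constants of `d_5'`. -/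
noncomputable def CD5 (i j s : ℕ) : ℂ := strD5 i j s - strD5 j i s

/-- The bracket of `d_5'` on `ℂ^7`. -/
noncomputable def bra (u v : Fin 7 → ℂ) : Fin 7 → ℂ := fun s =>
  ∑ i : Fin 7, ∑ j : Fin 7, u i * v j * CD5 i.1 j.1 s.1

/-- The `k`-th basis vector of `ℂ^7`. -/
noncomputable def e (k : Fin 7) : Fin 7 → ℂ := Pi.single k 1

/-- The span of all brackets of elements of two subspaces. -/
noncomputable def braSpan (A B : Submodule ℂ (Fin 7 → ℂ)) : Submodule ℂ (Fin 7 → ℂ) :=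
  Submodule.span ℂ {z | ∃ u ∈ A, ∃ v ∈ B, z = bra u v}

/-- Lower central series `C^0(I) = I`, `C^{k+1}(I) = [I, C^k(I)]`. -/
noncomputable def lcs (I : Submodule ℂ (Fin 7 → ℂ)) : ℕ → Submodule ℂ (Fin 7 → ℂ)
  | 0 => I
  | k + 1 => braSpan I (lcs I k)

/-- `I` is an ideal of `d_5'`. -/
def IsIdeal (I : Submodule ℂ (Fin 7 → ℂ)) : Prop :=
  ∀ u : Fin 7 → ℂ, ∀ v ∈ I, bra u v ∈ I

set_option maxHeartbeats 2000000

lemma bra_eq (u v : Fin 7 → ℂ) : bra u v =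
    ![u 5 * v 0 - u 0 * v 5,
      2*(u 5 * v 1 - u 1 * v 5) + (u 6 * v 1 - u 1 * v 6),
      (u 0 * v 1 - u 1 * v 0) + 3*(u 5 * v 2 - u 2 * v 5) + (u 6 * v 2 - u 2 * v 6),
      (u 0 * v 2 - u 2 * v 0) + 4*(u 5 * v 3 - u 3 * v 5) + (u 6 * v 3 - u 3 * v 6),
      (u 1 * v 2 - u 2 * v 1) + 5*(u 5 * v 4 - u 4 * v 5) + 2*(u 6 * v 4 - u 4 * v 6),
      0, 0] := by
  have h0 : ((0:Fin 7):ℕ) = 0 := rfl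
  have h1 : ((1:Fin 7):ℕ) = 1 := rfl
  have h2 : ((2:Fin 7):ℕ) = 2 := rfl
  have h3 : ((3:Fin 7):ℕ) = 3 := rfl
  have h4 : ((4:Fin 7):ℕ) = 4 := rfl
  have h5 : ((5:Fin 7):ℕ) = 5 := rfl
  have h6 : ((6:Fin 7):ℕ) = 6 := rfl
  funext s
  fin_cases s <;>
  · simp only [bra, Fin.sum_univ_seven, CD5, strD5, h0, h1, h2, h3, h4, h5, h6]
    norm_num
    try ring

lemma e0 : e 0 = ![1,0,0,0,0,0,0] := by funext m; fin_cases m <;> rfl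
lemma e1 : e 1 = ![0,1,0,0,0,0,0] := by funext m; fin_cases m <;> rfl
lemma e2 : e 2 = ![0,0,1,0,0,0,0] := by funext m; fin_cases m <;> rfl
lemma e3 : e 3 = ![0,0,0,1,0,0,0] := by funext m; fin_cases m <;> rfl
lemma e4 : e 4 = ![0,0,0,0,1,0,0] := by funext m; fin_cases m <;> rfl

lemma vec0 (a b c d f g h : ℂ) : (![a,b,c,d,f,g,h]) 0 = a := rfl
lemma vec1 (a b c d f g h : ℂ) : (![a,b,c,d,f,g,h]) 1 = b := rfl
lemma vec2 (a b c d f g h : ℂ) : (![a,b,c,d,f,g,h]) 2 = c := rfl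
lemma vec3 (a b c d f g h : ℂ) : (![a,b,c,d,f,g,h]) 3 = d := rfl
lemma vec4 (a b c d f g h : ℂ) : (![a,b,c,d,f,g,h]) 4 = f := rfl
lemma vec5 (a b c d f g h : ℂ) : (![a,b,c,d,f,g,h]) 5 = g := rfl
lemma vec6 (a b c d f g h : ℂ) : (![a,b,c,d,f,g,h]) 6 = h := rfl

lemma memN (v : Fin 7 → ℂ) :
    v ∈ Submodule.span ℂ {e 0, e 1, e 2, e 3, e 4} ↔ v 5 = 0 ∧ v 6 = 0 := by
  constructor
  · intro hv
    induction hv using Submodule.span_induction with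
    | mem x hx =>
      simp only [Set.mem_insert_iff, Set.mem_singleton_iff] at hx
      rcases hx with rfl|rfl|rfl|rfl|rfl <;> exact ⟨rfl, rfl⟩
    | zero => exact ⟨rfl, rfl⟩
    | add x y _ _ ihx ihy => exact ⟨by simp [ihx.1, ihy.1], by simp [ihx.2, ihy.2]⟩
    | smul a x _ ih => exact ⟨by simp [ih.1], by simp [ih.2]⟩
  · rintro ⟨h5, h6⟩
    have hrep : v = v 0 • e 0 + v 1 • e 1 + v 2 • e 2 + v 3 • e 3 + v 4 • e 4 := by
      funext m
      fin_cases m <;>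
        simp [e0, e1, e2, e3, e4, vec0, vec1, vec2, vec3, vec4, vec5, vec6, h5, h6]
    rw [hrep]
    have m0 : e 0 ∈ Submodule.span ℂ {e 0, e 1, e 2, e 3, e 4} :=
      Submodule.subset_span (by simp)
    have m1 : e 1 ∈ Submodule.span ℂ {e 0, e 1, e 2, e 3, e 4} :=
      Submodule.subset_span (by simp)
    have m2 : e 2 ∈ Submodule.span ℂ {e 0, e 1, e 2, e 3, e 4} :=
      Submodule.subset_span (by simp)
    have m3 : e 3 ∈ Submodule.span ℂ {e 0, e 1, e 2, e 3, e 4} :=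
      Submodule.subset_span (by simp)
    have m4 : e 4 ∈ Submodule.span ℂ {e 0, e 1, e 2, e 3, e 4} :=
      Submodule.subset_span (by simp)
    exact Submodule.add_mem _ (Submodule.add_mem _ (Submodule.add_mem _ (Submodule.add_mem _
      (Submodule.smul_mem _ _ m0) (Submodule.smul_mem _ _ m1)) (Submodule.smul_mem _ _ m2))
      (Submodule.smul_mem _ _ m3)) (Submodule.smul_mem _ _ m4)

lemma memM2 (v : Fin 7 → ℂ) :
    v ∈ Submodule.span ℂ {e 2, e 3, e 4} ↔ v 0 = 0 ∧ v 1 = 0 ∧ v 5 = 0 ∧ v 6 = 0 := by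
  constructor
  · intro hv
    induction hv using Submodule.span_induction with
    | mem x hx =>
      simp only [Set.mem_insert_iff, Set.mem_singleton_iff] at hx
      rcases hx with rfl|rfl|rfl <;> exact ⟨rfl, rfl, rfl, rfl⟩
    | zero => exact ⟨rfl, rfl, rfl, rfl⟩
    | add x y _ _ ihx ihy =>
      exact ⟨by simp [ihx.1, ihy.1], by simp [ihx.2.1, ihy.2.1],
        by simp [ihx.2.2.1, ihy.2.2.1], by simp [ihx.2.2.2, ihy.2.2.2]⟩
    | smul a x _ ih =>
      exact ⟨by simp [ih.1], by simp [ih.2.1], by simp [ih.2.2.1], by simp [ih.2.2.2]⟩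
  · rintro ⟨h0, h1, h5, h6⟩
    have hrep : v = v 2 • e 2 + v 3 • e 3 + v 4 • e 4 := by
      funext m
      fin_cases m <;>
        simp [e2, e3, e4, vec0, vec1, vec2, vec3, vec4, vec5, vec6, h0, h1, h5, h6]
    rw [hrep]
    have m2 : e 2 ∈ Submodule.span ℂ {e 2, e 3, e 4} := Submodule.subset_span (by simp)
    have m3 : e 3 ∈ Submodule.span ℂ {e 2, e 3, e 4} := Submodule.subset_span (by simp)
    have m4 : e 4 ∈ Submodule.span ℂ {e 2, e 3, e 4} := Submodule.subset_span (by simp)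
    exact Submodule.add_mem _ (Submodule.add_mem _ (Submodule.smul_mem _ _ m2)
      (Submodule.smul_mem _ _ m3)) (Submodule.smul_mem _ _ m4)

lemma memM3 (v : Fin 7 → ℂ) :
    v ∈ Submodule.span ℂ {e 3, e 4} ↔ v 0 = 0 ∧ v 1 = 0 ∧ v 2 = 0 ∧ v 5 = 0 ∧ v 6 = 0 := by
  constructor
  · intro hv
    induction hv using Submodule.span_induction with
    | mem x hx =>
      simp only [Set.mem_insert_iff, Set.mem_singleton_iff] at hx
      rcases hx with rfl|rfl <;> exact ⟨rfl, rfl, rfl, rfl, rfl⟩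
    | zero => exact ⟨rfl, rfl, rfl, rfl, rfl⟩
    | add x y _ _ ihx ihy =>
      exact ⟨by simp [ihx.1, ihy.1], by simp [ihx.2.1, ihy.2.1],
        by simp [ihx.2.2.1, ihy.2.2.1], by simp [ihx.2.2.2.1, ihy.2.2.2.1],
        by simp [ihx.2.2.2.2, ihy.2.2.2.2]⟩
    | smul a x _ ih =>
      exact ⟨by simp [ih.1], by simp [ih.2.1], by simp [ih.2.2.1],
        by simp [ih.2.2.2.1], by simp [ih.2.2.2.2]⟩
  · rintro ⟨h0, h1, h2, h5, h6⟩
    have hrep : v = v 3 • e 3 + v 4 • e 4 := by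
      funext m
      fin_cases m <;>
        simp [e3, e4, vec0, vec1, vec2, vec3, vec4, vec5, vec6, h0, h1, h2, h5, h6]
    rw [hrep]
    have m3 : e 3 ∈ Submodule.span ℂ {e 3, e 4} := Submodule.subset_span (by simp)
    have m4 : e 4 ∈ Submodule.span ℂ {e 3, e 4} := Submodule.subset_span (by simp)
    exact Submodule.add_mem _ (Submodule.smul_mem _ _ m3) (Submodule.smul_mem _ _ m4)

lemma bra_e0_e1 : bra (e 0) (e 1) = e 2 := by
  rw [bra_eq]; funext m
  fin_cases m <;> simp [e0, e1, e2, vec0, vec1, vec2, vec3, vec4, vec5, vec6]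

lemma bra_e0_e2 : bra (e 0) (e 2) = e 3 := by
  rw [bra_eq]; funext m
  fin_cases m <;> simp [e0, e2, e3, vec0, vec1, vec2, vec3, vec4, vec5, vec6]

lemma bra_e1_e2 : bra (e 1) (e 2) = e 4 := by
  rw [bra_eq]; funext m
  fin_cases m <;> simp [e1, e2, e4, vec0, vec1, vec2, vec3, vec4, vec5, vec6]

lemma bra_antisymm (u v : Fin 7 → ℂ) : bra u v = - bra v u := by
  rw [bra_eq, bra_eq]; funext m
  fin_cases m <;> simp [vec0, vec1, vec2, vec3, vec4, vec5, vec6] <;> ring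

lemma eig3 (v : Fin 7 → ℂ) : bra v (e 3) = (4 * v 5 + v 6) • e 3 := by
  rw [bra_eq, e3]; funext m
  fin_cases m <;> simp [vec0, vec1, vec2, vec3, vec4, vec5, vec6] <;> ring

lemma eig4 (v : Fin 7 → ℂ) : bra v (e 4) = (5 * v 5 + 2 * v 6) • e 4 := by
  rw [bra_eq, e4]; funext m
  fin_cases m <;> simp [vec0, vec1, vec2, vec3, vec4, vec5, vec6] <;> ring

lemma lcs_succ (I : Submodule ℂ (Fin 7 → ℂ)) (k : ℕ) :
    lcs I (k + 1) = braSpan I (lcs I k) := rfl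

lemma eigen_contra (I : Submodule ℂ (Fin 7 → ℂ)) (hI : IsIdeal I)
    (hnil : ∃ k, lcs I k = ⊥) (v : Fin 7 → ℂ) (hv : v ∈ I)
    (w : Fin 7 → ℂ) (hw : w ≠ 0) (c : ℂ) (hc : bra v w = c • w) : c = 0 := by
  by_contra hc0
  have hwI : w ∈ I := by
    have h1 : bra w v ∈ I := hI w v hv
    have h2 : bra v w ∈ I := by rw [bra_antisymm v w]; exact I.neg_mem h1
    rw [hc] at h2
    have h3 := I.smul_mem c⁻¹ h2
    rwa [smul_smul, inv_mul_cancel₀ hc0, one_smul] at h3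
  have hall : ∀ k, w ∈ lcs I k := by
    intro k
    induction k with
    | zero => exact hwI
    | succ k ih =>
      rw [lcs_succ]
      have h2 : bra v w ∈ braSpan I (lcs I k) := Submodule.subset_span ⟨v, hv, w, ih, rfl⟩
      rw [hc] at h2
      have h3 := (braSpan I (lcs I k)).smul_mem c⁻¹ h2
      rwa [smul_smul, inv_mul_cancel₀ hc0, one_smul] at h3
  obtain ⟨k0, hk0⟩ := hnil
  have := hall k0
  rw [hk0] at this
  exact hw ((Submodule.mem_bot ℂ).mp this)

lemma lcs1 : lcs (Submodule.span ℂ {e 0, e 1, e 2, e 3, e 4}) 1 =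
    Submodule.span ℂ {e 2, e 3, e 4} := by
  rw [lcs_succ]
  apply le_antisymm
  · apply Submodule.span_le.mpr
    rintro z ⟨u, hu, v, hv, rfl⟩
    obtain ⟨hu5, hu6⟩ := (memN u).mp hu
    obtain ⟨hv5, hv6⟩ := (memN v).mp hv
    have : bra u v ∈ Submodule.span ℂ {e 2, e 3, e 4} := by
      rw [memM2, bra_eq]
      exact ⟨by simp [vec0, hu5, hv5], by simp [vec1, hu5, hu6, hv5, hv6], rfl, rfl⟩
    exact this
  · apply Submodule.span_le.mpr
    have m0 : e 0 ∈ Submodule.span ℂ {e 0, e 1, e 2, e 3, e 4} := Submodule.subset_span (by simp)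
    have m1 : e 1 ∈ Submodule.span ℂ {e 0, e 1, e 2, e 3, e 4} := Submodule.subset_span (by simp)
    have m2 : e 2 ∈ Submodule.span ℂ {e 0, e 1, e 2, e 3, e 4} := Submodule.subset_span (by simp)
    rintro z hz
    simp only [Set.mem_insert_iff, Set.mem_singleton_iff] at hz
    rcases hz with rfl|rfl|rfl
    · exact Submodule.subset_span ⟨e 0, m0, e 1, m1, bra_e0_e1.symm⟩
    · exact Submodule.subset_span ⟨e 0, m0, e 2, m2, bra_e0_e2.symm⟩
    · exact Submodule.subset_span ⟨e 1, m1, e 2, m2, bra_e1_e2.symm⟩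

lemma lcs2 : lcs (Submodule.span ℂ {e 0, e 1, e 2, e 3, e 4}) 2 =
    Submodule.span ℂ {e 3, e 4} := by
  rw [lcs_succ, lcs1]
  apply le_antisymm
  · apply Submodule.span_le.mpr
    rintro z ⟨u, hu, v, hv, rfl⟩
    obtain ⟨hu5, hu6⟩ := (memN u).mp hu
    obtain ⟨hv0, hv1, hv5, hv6⟩ := (memM2 v).mp hv
    have : bra u v ∈ Submodule.span ℂ {e 3, e 4} := by
      rw [memM3, bra_eq]
      exact ⟨by simp [vec0, hu5, hv5], by simp [vec1, hu5, hu6, hv5, hv6],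
        by simp [vec2, hu5, hu6, hv0, hv1, hv5, hv6], rfl, rfl⟩
    exact this
  · apply Submodule.span_le.mpr
    have m0 : e 0 ∈ Submodule.span ℂ {e 0, e 1, e 2, e 3, e 4} := Submodule.subset_span (by simp)
    have m1 : e 1 ∈ Submodule.span ℂ {e 0, e 1, e 2, e 3, e 4} := Submodule.subset_span (by simp)
    have m2 : e 2 ∈ Submodule.span ℂ {e 2, e 3, e 4} := Submodule.subset_span (by simp)
    rintro z hz
    simp only [Set.mem_insert_iff, Set.mem_singleton_iff] at hz
    rcases hz with rfl|rfl
    · exact Submodule.subset_span ⟨e 0, m0, e 2, m2, bra_e0_e2.symm⟩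
    · exact Submodule.subset_span ⟨e 1, m1, e 2, m2, bra_e1_e2.symm⟩

lemma lcs3 : lcs (Submodule.span ℂ {e 0, e 1, e 2, e 3, e 4}) 3 = ⊥ := by
  rw [lcs_succ, lcs2]
  apply le_antisymm _ bot_le
  apply Submodule.span_le.mpr
  rintro z ⟨u, hu, v, hv, rfl⟩
  obtain ⟨hu5, hu6⟩ := (memN u).mp hu
  obtain ⟨hv0, hv1, hv2, hv5, hv6⟩ := (memM3 v).mp hv
  have hz : bra u v = 0 := by
    rw [bra_eq]; funext m
    fin_cases m <;>
      simp [vec0, vec1, vec2, vec3, vec4, vec5, vec6, hu5, hu6, hv0, hv1, hv2, hv5, hv6]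
  simp [hz, Submodule.mem_bot]

/-- The subspace spanned by `X_0, X_1, X_2, X_3, Y_1` is the nilradical of `d_5'`:
it is a nilpotent ideal, its lower central series is
`C^1 = span{X_2, X_3, Y_1}`, `C^2 = span{X_3, Y_1}`, `C^3 = 0`,
and it contains every nilpotent ideal of `d_5'`. -/
theorem d5'_nilradical :
    IsIdeal (Submodule.span ℂ {e 0, e 1, e 2, e 3, e 4}) ∧
    lcs (Submodule.span ℂ {e 0, e 1, e 2, e 3, e 4}) 1 =
      Submodule.span ℂ {e 2, e 3, e 4} ∧
    lcs (Submodule.span ℂ {e 0, e 1, e 2, e 3, e 4}) 2 =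
      Submodule.span ℂ {e 3, e 4} ∧
    lcs (Submodule.span ℂ {e 0, e 1, e 2, e 3, e 4}) 3 = ⊥ ∧
    (∀ I : Submodule ℂ (Fin 7 → ℂ), IsIdeal I → (∃ k, lcs I k = ⊥) →
      I ≤ Submodule.span ℂ {e 0, e 1, e 2, e 3, e 4}) := by
  refine ⟨?_, lcs1, lcs2, lcs3, ?_⟩
  · intro u v _
    rw [memN, bra_eq]
    exact ⟨rfl, rfl⟩
  · intro I hI hnil v hv
    rw [memN]
    have e3ne : e 3 ≠ 0 := by
      intro h
      have := congrFun h 3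
      rw [e3, vec3, Pi.zero_apply] at this
      exact one_ne_zero this
    have e4ne : e 4 ≠ 0 := by
      intro h
      have := congrFun h 4
      rw [e4, vec4, Pi.zero_apply] at this
      exact one_ne_zero this
    have h3 : (4 * v 5 + v 6 : ℂ) = 0 :=
      eigen_contra I hI hnil v hv (e 3) e3ne _ (eig3 v)
    have h4 : (5 * v 5 + 2 * v 6 : ℂ) = 0 :=
      eigen_contra I hI hnil v hv (e 4) e4ne _ (eig4 v)
    constructor
    · linear_combination (2/3 : ℂ) * h3 - (1/3 : ℂ) * h4
    · linear_combination (-5/3 : ℂ) * h3 + (4/3 : ℂ) * h4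
end

section
/- The rational function F_1 = (2x_0 y_1 + x_2^2 − 2x_1 x_3)^3 / (x_3^2 y_1^2) is annihilated by all seven differential operators realizing the coadjoint representation of d_5'; that is, F_1 is an invariant of the coadjoint representation of d_5'. Concretely: (−x_2 ∂_{x_1} − x_3 ∂_{x_2} − y_1 ∂_{x_1}·0 + x_0 ∂_{v_1})F_1 and the analogous operators for X_1, X_2, X_3, Y_1, V_1, V_2 all vanish, where the operators are X̂_i = −C_{ij}^k x_k ∂_{x_j}. -/
/-- Partial derivative `∂F/∂x_j` of a function on the dual, in coordinates. -/
noncomputable def pd (j : ℕ) (F : (ℕ → ℂ) → ℂ) (p : ℕ → ℂ) : ℂ :=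
  deriv (fun t => F (Function.update p j t)) (p j)

/-- The differential operator `X̂_i = −C_{ij}^k x_k ∂_{x_j}` realizing the
coadjoint representation of `d_5'`, applied to `F` at the point `p`. -/
noncomputable def opD5 (i : ℕ) (F : (ℕ → ℂ) → ℂ) (p : ℕ → ℂ) : ℂ :=
  ∑ j ∈ Finset.range 7, (-(∑ k ∈ Finset.range 7, CD5 i j k * p k)) * pd j F p

/-- The rational function `F_1 = (2x_0y_1 + x_2² − 2x_1x_3)³/(x_3²y_1²)`. -/
noncomputable def F1 (p : ℕ → ℂ) : ℂ :=
  (2 * p 0 * p 4 + (p 2) ^ 2 - 2 * p 1 * p 3) ^ 3 / ((p 3) ^ 2 * (p 4) ^ 2)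

/-!
`F_1 = N³/(x_3² y_1²)` with `N = 2x_0y_1 + x_2² − 2x_1x_3`, and each of `N`, `x_3`, `y_1` is a
semi-invariant: the nilradical `⟨X_0, X_1, X_2, X_3, Y_1⟩` kills all three, while `V_1` and
`V_2` are gradings under which they are homogeneous of weights `(6, 4, 5)` and `(2, 1, 2)`.
Writing `X̂_i u = λ_i(u) u` for these, `X̂_i` being a derivation gives
`X̂_i F_1 = (3 λ_i(N) − 2 λ_i(x_3) − 2 λ_i(y_1)) F_1`, and `3·6 = 2·4 + 2·5`, `3·2 = 2·1 + 2·2`.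
-/

open Finset Function

theorem hasDerivAt_update_apply {𝕜 ι : Type*} [NontriviallyNormedField 𝕜] [DecidableEq ι]
    (p : ι → 𝕜) (j k : ι) :
    HasDerivAt (fun t => update p j t k) ((Pi.single j 1 : ι → 𝕜) k) (p j) := by
  rcases eq_or_ne k j with rfl | hkj
  · simpa using hasDerivAt_id' (p k)
  · simpa [update_of_ne hkj, Pi.single_eq_of_ne hkj] using hasDerivAt_const (p j) (p k)

/-- The `j`-th component of the vector field `X̂_i = −C_{ij}^k x_k ∂_{x_j}` at `p`. -/
noncomputable def coadjCoeff (i j : ℕ) (p : ℕ → ℂ) : ℂ :=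
  -(∑ k ∈ range 7, CD5 i j k * p k)

def numF1 (p : ℕ → ℂ) : ℂ := 2 * p 0 * p 4 + p 2 ^ 2 - 2 * p 1 * p 3

def dNumF1 (p v : ℕ → ℂ) : ℂ :=
  2 * (v 0 * p 4 + p 0 * v 4) + 2 * p 2 * v 2 - 2 * (v 1 * p 3 + p 1 * v 3)

noncomputable def dF1 (p v : ℕ → ℂ) : ℂ :=
  (3 * numF1 p ^ 2 * p 3 * p 4 * dNumF1 p v - 2 * numF1 p ^ 3 * (v 3 * p 4 + p 3 * v 4)) /
    (p 3 ^ 3 * p 4 ^ 3)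

theorem hasDerivAt_numF1_update (p : ℕ → ℂ) (j : ℕ) :
    HasDerivAt (fun t => numF1 (update p j t)) (dNumF1 p (Pi.single j 1)) (p j) := by
  have hx (k : ℕ) := hasDerivAt_update_apply p j k
  have h : HasDerivAt (fun t => numF1 (update p j t)) _ (p j) :=
    ((((hx 0).const_mul 2).mul (hx 4)).add ((hx 2).pow 2)).sub
      (((hx 1).const_mul 2).mul (hx 3))
  simp only [update_eq_self] at h
  refine h.congr_deriv ?_
  simp only [dNumF1]
  ring

theorem pd_F1 {p : ℕ → ℂ} (hp3 : p 3 ≠ 0) (hp4 : p 4 ≠ 0) (j : ℕ) :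
    pd j F1 p = dF1 p (Pi.single j 1) := by
  have hx (k : ℕ) := hasDerivAt_update_apply p j k
  have h : HasDerivAt (fun t => F1 (update p j t)) _ (p j) :=
    ((hasDerivAt_numF1_update p j).pow 3).div (((hx 3).pow 2).mul ((hx 4).pow 2))
      (by simp [hp3, hp4])
  simp only [update_eq_self, Pi.pow_apply] at h
  rw [pd, h.deriv, dF1]
  field_simp
  ring

theorem opD5_F1 {p : ℕ → ℂ} (hp3 : p 3 ≠ 0) (hp4 : p 4 ≠ 0) (i : ℕ) :
    opD5 i F1 p = dF1 p (coadjCoeff i · p) := by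
  change ∑ j ∈ range 7, coadjCoeff i j p * pd j F1 p = _
  simp only [pd_F1 hp3 hp4, sum_range_succ, sum_range_zero]
  simp only [dF1, dNumF1, Pi.single_apply]
  norm_num
  ring

/-- The character of `d_5'` that vanishes on the nilradical and takes the values `a`, `b`
on `V_1`, `V_2`. -/
def gradingChar (a b : ℂ) (i : ℕ) : ℂ := (if i = 5 then a else 0) + (if i = 6 then b else 0)

theorem coadjCoeff_three {i : ℕ} (hi : i < 7) (p : ℕ → ℂ) :
    coadjCoeff i 3 p = -gradingChar 4 1 i * p 3 := by
  interval_cases i <;> simp [coadjCoeff, CD5, strD5, gradingChar]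

theorem coadjCoeff_four {i : ℕ} (hi : i < 7) (p : ℕ → ℂ) :
    coadjCoeff i 4 p = -gradingChar 5 2 i * p 4 := by
  interval_cases i <;> simp [coadjCoeff, CD5, strD5, gradingChar]

theorem dNumF1_coadjCoeff {i : ℕ} (hi : i < 7) (p : ℕ → ℂ) :
    dNumF1 p (coadjCoeff i · p) = -gradingChar 6 2 i * numF1 p := by
  interval_cases i <;> simp [dNumF1, numF1, coadjCoeff, CD5, strD5, gradingChar] <;> ring

theorem gradingChar_balance (i : ℕ) :
    3 * gradingChar 6 2 i = 2 * gradingChar 4 1 i + 2 * gradingChar 5 2 i := by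
  simp only [gradingChar]
  split_ifs <;> norm_num

/-- `F_1` is annihilated by all seven operators `X̂_i = −C_{ij}^k x_k ∂_{x_j}`
realizing the coadjoint representation of `d_5'`; i.e. `F_1` is an invariant of
the coadjoint representation of `d_5'` (on the open set `x_3 y_1 ≠ 0`). -/
theorem F1_invariant_d5' :
    ∀ p : ℕ → ℂ, p 3 ≠ 0 → p 4 ≠ 0 → ∀ i < 7, opD5 i F1 p = 0 := by
  intro p hp3 hp4 i hi
  rw [opD5_F1 hp3 hp4, dF1, dNumF1_coadjCoeff hi, coadjCoeff_three hi, coadjCoeff_four hi]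
  linear_combination (-numF1 p ^ 3 * p 3 * p 4 / (p 3 ^ 3 * p 4 ^ 3)) * gradingChar_balance i
end
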